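/- For λ ∈ ℝ, the 8-dimensional real vector space with basis a₁,a₂,b₁,b₂,v′₁,v″₁,v′₂,v″₂ and brackets [a₁,b₁]=-3b₁, [a₁,b₂]=-3b₂, [a₂,b₁]=9b₂, [a₂,b₂]=-9b₁, [a₁,v′₂]=-3v′₂, [a₁,v″₂]=-3v″₂, [a₂,v′₁]=-6v″₁, [a₂,v″₁]=6v′₁, [a₂,v′₂]=3v″₂, [a₂,v″₂]=-3v′₂, [b₁,v′₁]=v′₂, [b₁,v″₁]=v″₂, [b₂,v′₁]=v″₂, [b₂,v″₁]=-v′₂, [v′₁,v″₁]=6λ²a₂, [v′₁,v′₂]=6λv′₂-27λ²b₁, [v′₁,v″₂]=-6λv″₂-27λ²b₂, [v″₁,v′₂]=-6λv″₂+27λ²b₂, [v″₁,v″₂]=-6λv′₂-27λ²b₁ (all other brackets zero) satisfies the Jacobi identity, and hence defines a Lie algebra for every value of λ. -/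
import Mathlib


/-- the deformed bracket of Appendix A (type III, `n = 2`), with deformation parameter `λ`;
basis order `a₁,a₂,b₁,b₂,v′₁,v″₁,v′₂,v″₂ ↦` indices `0,...,7`. -/
def br12 (lam : ℝ) (x y : Fin 8 → ℝ) : Fin 8 → ℝ := fun i =>
  (if i = 1 then 6*lam^2*(x 4 * y 5 - x 5 * y 4) else 0) +
  (if i = 2 then -3*(x 0 * y 2 - x 2 * y 0) - 9*(x 1 * y 3 - x 3 * y 1)
      - 27*lam^2*(x 4 * y 6 - x 6 * y 4) - 27*lam^2*(x 5 * y 7 - x 7 * y 5) else 0) +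
  (if i = 3 then -3*(x 0 * y 3 - x 3 * y 0) + 9*(x 1 * y 2 - x 2 * y 1)
      - 27*lam^2*(x 4 * y 7 - x 7 * y 4) + 27*lam^2*(x 5 * y 6 - x 6 * y 5) else 0) +
  (if i = 4 then 6*(x 1 * y 5 - x 5 * y 1) else 0) +
  (if i = 5 then -6*(x 1 * y 4 - x 4 * y 1) else 0) +
  (if i = 6 then -3*(x 0 * y 6 - x 6 * y 0) - 3*(x 1 * y 7 - x 7 * y 1)
      + (x 2 * y 4 - x 4 * y 2) - (x 3 * y 5 - x 5 * y 3)
      + 6*lam*(x 4 * y 6 - x 6 * y 4) - 6*lam*(x 5 * y 7 - x 7 * y 5) else 0) +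
  (if i = 7 then -3*(x 0 * y 7 - x 7 * y 0) + 3*(x 1 * y 6 - x 6 * y 1)
      + (x 2 * y 5 - x 5 * y 2) + (x 3 * y 4 - x 4 * y 3)
      - 6*lam*(x 4 * y 7 - x 7 * y 4) - 6*lam*(x 5 * y 6 - x 6 * y 5) else 0)

/-- for every `λ ∈ ℝ` the deformed bracket `br12 λ` is antisymmetric and
satisfies the Jacobi identity, hence defines a Lie algebra structure on `ℝ⁸`. -/
theorem submaximal_cprojective_stmt12 (lam : ℝ) :
    (∀ x y, br12 lam x y = - br12 lam y x) ∧
    (∀ x y z, br12 lam (br12 lam x y) z + br12 lam (br12 lam y z) x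
      + br12 lam (br12 lam z x) y = 0) := by
  constructor
  · intro x y
    funext i
    fin_cases i <;> simp [br12] <;> ring
  · intro x y z
    funext i
    fin_cases i <;> simp [br12, Fin.isValue] <;> ring
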